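/- Let A be a real m × n matrix, b ∈ ℝᵐ, λ > 0, and define on ℝⁿ the functions f(x) = Σᵢ log(1 + exp(−bᵢ·(A x)ᵢ)) and g(x) = λ·‖x‖₁. Suppose the gradient of f is Lipschitz continuous with constant L > 0, and let t satisfy 0 < t ≤ 1/L. Let x₀ ∈ ℝⁿ and let (xₖ) be the sequence with x 0 = x₀ given by the explicit update: yₖ = xₖ − t·Aᵀ d(xₖ) where d(xₖ)ᵢ = −bᵢ/(1 + exp(bᵢ·(A xₖ)ᵢ)), and x(k+1)ᵢ = sign(yₖᵢ)·max(|yₖᵢ| − t·λ, 0) for each coordinate i. Then for every positive integer k and every xm ∈ ℝⁿ, (f + g)(xₖ) − (f + g)(xm) ≤ (1/(2·k·t))·‖x₀ − xm‖². -/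

import Mathlib

open Matrix

/-- Matrix–vector multiplication as a map between Euclidean spaces. -/
noncomputable def mulVecE {m n : ℕ} (A : Matrix (Fin m) (Fin n) ℝ)
    (x : EuclideanSpace ℝ (Fin n)) : EuclideanSpace ℝ (Fin m) :=
  WithLp.toLp 2 (A.mulVec x)

/-- The ℓ¹ norm on ℝⁿ. -/
noncomputable def l1Norm {n : ℕ} (x : EuclideanSpace ℝ (Fin n)) : ℝ := ∑ i, |x i|

/-- The vector `d(x) ∈ ℝᵐ` with `d(x)ᵢ = -bᵢ / (1 + exp(bᵢ (Ax)ᵢ))`. -/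
noncomputable def logisticDual {m n : ℕ} (A : Matrix (Fin m) (Fin n) ℝ)
    (b : EuclideanSpace ℝ (Fin m)) (x : EuclideanSpace ℝ (Fin n)) :
    EuclideanSpace ℝ (Fin m) :=
  WithLp.toLp 2 (fun i => -b i / (1 + Real.exp (b i * mulVecE A x i)))

section Aux

open Finset

/-- scalar logistic loss term -/
noncomputable def philog (c s : ℝ) : ℝ := Real.log (1 + Real.exp (-c * s))

lemma philog_hasDerivAt (c s : ℝ) :
    HasDerivAt (fun u : ℝ => philog c u) (-c / (1 + Real.exp (c * s))) s := by
  have h1 : HasDerivAt (fun u : ℝ => -c * u) (-c) s := by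
    simpa using (hasDerivAt_id s).const_mul (-c)
  have h2 := h1.exp
  have h3 := h2.const_add 1
  have hpos : (0:ℝ) < 1 + Real.exp (-c * s) := by positivity
  have h4 := h3.log (ne_of_gt hpos)
  convert h4 using 1
  · rfl
  have he : Real.exp (-c * s) * Real.exp (c * s) = 1 := by
    rw [← Real.exp_add]; ring_nf; exact Real.exp_zero
  have hpos2 : (0:ℝ) < 1 + Real.exp (c * s) := by positivity
  rw [div_eq_div_iff hpos2.ne' hpos.ne']
  linear_combination c * he

lemma philog_deriv (c : ℝ) :
    deriv (fun u : ℝ => philog c u) = fun s => -c / (1 + Real.exp (c * s)) :=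
  funext fun s => (philog_hasDerivAt c s).deriv

lemma philog_convex (c : ℝ) : ConvexOn ℝ Set.univ (fun u : ℝ => philog c u) := by
  apply Monotone.convexOn_univ_of_deriv
  · exact fun s => (philog_hasDerivAt c s).differentiableAt
  · rw [philog_deriv]
    intro a u hau
    have h1 : (0:ℝ) < 1 + Real.exp (c * a) := by positivity
    have h2 : (0:ℝ) < 1 + Real.exp (c * u) := by positivity
    rw [div_le_div_iff₀ h1 h2]
    rcases le_or_gt 0 c with hc | hc
    · have : Real.exp (c * a) ≤ Real.exp (c * u) :=
        Real.exp_le_exp.2 (by nlinarith)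
      nlinarith
    · have : Real.exp (c * u) ≤ Real.exp (c * a) :=
        Real.exp_le_exp.2 (by nlinarith)
      nlinarith

/-- first-order convexity inequality for the scalar logistic term -/
lemma philog_first_order (c s₁ s₂ : ℝ) :
    philog c s₁ + (-c / (1 + Real.exp (c * s₁))) * (s₂ - s₁) ≤ philog c s₂ := by
  have hconv := philog_convex c
  have hd := philog_hasDerivAt c s₁
  rcases lt_trichotomy s₁ s₂ with h | h | h
  · have := hconv.le_slope_of_hasDerivAt (Set.mem_univ s₁) (Set.mem_univ s₂) h hd
    rw [slope_def_field, le_div_iff₀ (by linarith : (0:ℝ) < s₂ - s₁)] at this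
    linarith
  · simp [h]
  · have := hconv.slope_le_of_hasDerivAt (Set.mem_univ s₂) (Set.mem_univ s₁) h hd
    rw [slope_def_field, div_le_iff₀ (by linarith : (0:ℝ) < s₁ - s₂)] at this
    nlinarith

end Aux

section Grad

variable {m n : ℕ}

/-- The i-th row functional `x ↦ (Ax)ᵢ` as a continuous linear map. -/
noncomputable def rowCLM (A : Matrix (Fin m) (Fin n) ℝ) (i : Fin m) :
    EuclideanSpace ℝ (Fin n) →L[ℝ] ℝ :=
  LinearMap.toContinuousLinearMap
    { toFun := fun u => A.mulVec u i
      map_add' := fun u v => by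
        simp only [Matrix.mulVec, dotProduct, PiLp.add_apply, mul_add,
          Finset.sum_add_distrib]
      map_smul' := fun c u => by
        simp only [Matrix.mulVec, dotProduct, PiLp.smul_apply, smul_eq_mul,
          RingHom.id_apply, Finset.mul_sum]
        exact Finset.sum_congr rfl fun j _ => by ring }

lemma rowCLM_apply (A : Matrix (Fin m) (Fin n) ℝ) (i : Fin m)
    (u : EuclideanSpace ℝ (Fin n)) : rowCLM A i u = mulVecE A u i := rfl

/-- the logistic loss -/
noncomputable def flog (A : Matrix (Fin m) (Fin n) ℝ) (b : EuclideanSpace ℝ (Fin m))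
    (x : EuclideanSpace ℝ (Fin n)) : ℝ :=
  ∑ i, Real.log (1 + Real.exp (-b i * mulVecE A x i))

lemma flog_hasGradientAt (A : Matrix (Fin m) (Fin n) ℝ) (b : EuclideanSpace ℝ (Fin m))
    (x : EuclideanSpace ℝ (Fin n)) :
    HasGradientAt (flog A b) (mulVecE Aᵀ (logisticDual A b x)) x := by
  rw [hasGradientAt_iff_hasFDerivAt]
  have hterm : ∀ i : Fin m, HasFDerivAt (fun u => philog (b i) (rowCLM A i u))
      ((logisticDual A b x i) • rowCLM A i) x := by
    intro i
    exact (philog_hasDerivAt (b i) (rowCLM A i x)).comp_hasFDerivAt x (rowCLM A i).hasFDerivAt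
  have hsum := HasFDerivAt.fun_sum (fun i (_ : i ∈ Finset.univ) => hterm i)
  have hfun : flog A b = fun u => ∑ i, philog (b i) (rowCLM A i u) := rfl
  rw [hfun]
  refine hsum.congr_fderiv (Eq.symm ?_)
  ext u
  simp only [InnerProductSpace.toDual_apply_apply, PiLp.inner_apply, RCLike.inner_apply,
    conj_trivial, ContinuousLinearMap.coe_sum', Finset.sum_apply,
    ContinuousLinearMap.coe_smul', Pi.smul_apply, smul_eq_mul, rowCLM_apply,
    mulVecE, Matrix.mulVec, dotProduct, Matrix.transpose_apply,
    Finset.sum_mul, Finset.mul_sum]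
  rw [Finset.sum_comm]
  exact Finset.sum_congr rfl fun i _ => Finset.sum_congr rfl fun j _ => by ring

lemma flog_gradient (A : Matrix (Fin m) (Fin n) ℝ) (b : EuclideanSpace ℝ (Fin m))
    (x : EuclideanSpace ℝ (Fin n)) :
    gradient (flog A b) x = mulVecE Aᵀ (logisticDual A b x) :=
  (flog_hasGradientAt A b x).gradient

end Grad

section Ineqs

open RealInnerProductSpace

variable {m n : ℕ}

lemma norm_sq_eq (u : EuclideanSpace ℝ (Fin n)) : ‖u‖ ^ 2 = ∑ i, (u i) ^ 2 := by
  rw [EuclideanSpace.norm_eq, Real.sq_sqrt (by positivity)]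
  simp [sq_abs]

lemma inner_mulVecE (A : Matrix (Fin m) (Fin n) ℝ) (d : EuclideanSpace ℝ (Fin m))
    (u : EuclideanSpace ℝ (Fin n)) :
    ⟪mulVecE Aᵀ d, u⟫ = ∑ i, d i * mulVecE A u i := by
  simp only [PiLp.inner_apply, RCLike.inner_apply, conj_trivial, mulVecE, Matrix.mulVec,
    dotProduct, Matrix.transpose_apply, Finset.sum_mul, Finset.mul_sum]
  rw [Finset.sum_comm]
  exact Finset.sum_congr rfl fun i _ => Finset.sum_congr rfl fun j _ => by ring

lemma mulVecE_sub (A : Matrix (Fin m) (Fin n) ℝ) (z x : EuclideanSpace ℝ (Fin n)) (i : Fin m) :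
    mulVecE A (z - x) i = mulVecE A z i - mulVecE A x i := by
  simp [mulVecE, Matrix.mulVec, dotProduct, PiLp.sub_apply, mul_sub,
    Finset.sum_sub_distrib]

/-- first-order convexity inequality for the logistic loss -/
lemma flog_convex_ineq (A : Matrix (Fin m) (Fin n) ℝ) (b : EuclideanSpace ℝ (Fin m))
    (x z : EuclideanSpace ℝ (Fin n)) :
    flog A b x + ⟪mulVecE Aᵀ (logisticDual A b x), z - x⟫ ≤ flog A b z := by
  rw [inner_mulVecE]
  have h1 : ∑ i, logisticDual A b x i * mulVecE A (z - x) i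
      = ∑ i, logisticDual A b x i * (mulVecE A z i - mulVecE A x i) :=
    Finset.sum_congr rfl fun i _ => by rw [mulVecE_sub]
  rw [h1, show flog A b x = ∑ i, philog (b i) (mulVecE A x i) from rfl,
    show flog A b z = ∑ i, philog (b i) (mulVecE A z i) from rfl, ← Finset.sum_add_distrib]
  exact Finset.sum_le_sum fun i _ => by
    simpa [logisticDual] using philog_first_order (b i) (mulVecE A x i) (mulVecE A z i)

/-- descent lemma -/
lemma flog_descent (A : Matrix (Fin m) (Fin n) ℝ) (b : EuclideanSpace ℝ (Fin m)) {L : ℝ}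
    (hlip : ∀ u v : EuclideanSpace ℝ (Fin n),
      ‖gradient (flog A b) u - gradient (flog A b) v‖ ≤ L * ‖u - v‖)
    (x v : EuclideanSpace ℝ (Fin n)) :
    flog A b (x + v) ≤ flog A b x + ⟪mulVecE Aᵀ (logisticDual A b x), v⟫
      + L / 2 * ‖v‖ ^ 2 := by
  have hlip' : ∀ u w : EuclideanSpace ℝ (Fin n),
      ‖mulVecE Aᵀ (logisticDual A b u) - mulVecE Aᵀ (logisticDual A b w)‖ ≤ L * ‖u - w‖ := by
    intro u w; have := hlip u w; rwa [flog_gradient, flog_gradient] at this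
  set G : ℝ := ⟪mulVecE Aᵀ (logisticDual A b x), v⟫ with hG
  have hc : ∀ τ : ℝ, HasDerivAt (fun τ : ℝ => x + τ • v) v τ := fun τ => by
    simpa using ((hasDerivAt_id τ).smul_const v).const_add x
  have hg : ∀ τ : ℝ, HasDerivAt (fun τ : ℝ => flog A b (x + τ • v))
      (⟪mulVecE Aᵀ (logisticDual A b (x + τ • v)), v⟫) τ := by
    intro τ
    have hf := (flog_hasGradientAt A b (x + τ • v)).hasFDerivAt
    have := hf.comp_hasDerivAt τ (hc τ)
    simp [InnerProductSpace.toDual_apply_apply] at this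
    exact this
  set h : ℝ → ℝ := fun τ => flog A b (x + τ • v) - τ * G - L * ‖v‖ ^ 2 / 2 * τ ^ 2 with hh_def
  have hh : ∀ τ : ℝ, HasDerivAt h
      (⟪mulVecE Aᵀ (logisticDual A b (x + τ • v)), v⟫ - G - L * ‖v‖ ^ 2 * τ) τ := by
    intro τ
    have h1 : HasDerivAt (fun τ : ℝ => τ * G) G τ := by
      simpa using (hasDerivAt_id τ).mul_const G
    have h2 : HasDerivAt (fun τ : ℝ => L * ‖v‖ ^ 2 / 2 * τ ^ 2)
        (L * ‖v‖ ^ 2 / 2 * (2 * τ)) τ := by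
      simpa using (hasDerivAt_pow 2 τ).const_mul (L * ‖v‖ ^ 2 / 2)
    have := ((hg τ).sub h1).sub h2
    refine this.congr_deriv ?_
    ring
  have hanti : AntitoneOn h (Set.Icc (0:ℝ) 1) := by
    apply antitoneOn_of_deriv_nonpos (convex_Icc 0 1)
    · exact (Differentiable.continuous fun τ => (hh τ).differentiableAt).continuousOn
    · exact fun τ _ => (hh τ).differentiableAt.differentiableWithinAt
    · intro τ hτ
      rw [interior_Icc] at hτ
      rw [(hh τ).deriv]
      have hb : ⟪mulVecE Aᵀ (logisticDual A b (x + τ • v)), v⟫ - G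
          ≤ L * ‖v‖ ^ 2 * τ := by
        rw [hG, ← inner_sub_left]
        calc ⟪mulVecE Aᵀ (logisticDual A b (x + τ • v)) - mulVecE Aᵀ (logisticDual A b x), v⟫
            ≤ ‖mulVecE Aᵀ (logisticDual A b (x + τ • v)) - mulVecE Aᵀ (logisticDual A b x)‖ * ‖v‖ :=
              real_inner_le_norm _ _
          _ ≤ (L * ‖x + τ • v - x‖) * ‖v‖ := by
              have := hlip' (x + τ • v) x
              exact mul_le_mul_of_nonneg_right this (norm_nonneg v)
          _ = L * ‖v‖ ^ 2 * τ := by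
              rw [add_sub_cancel_left, norm_smul, Real.norm_eq_abs,
                abs_of_pos hτ.1]
              ring
      linarith
  have h10 : h 1 ≤ h 0 := hanti (Set.left_mem_Icc.2 zero_le_one)
    (Set.right_mem_Icc.2 zero_le_one) zero_le_one
  have e0 : h 0 = flog A b x := by simp [hh_def]
  have e1 : h 1 = flog A b (x + v) - G - L * ‖v‖ ^ 2 / 2 := by simp [hh_def]
  rw [e0, e1] at h10
  linarith

end Ineqs

section Prox

variable {n : ℕ}

lemma prox_scalar {θ : ℝ} (hθ : 0 ≤ θ) (yv z : ℝ) :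
    θ * |Real.sign yv * max (|yv| - θ) 0|
      + (yv - Real.sign yv * max (|yv| - θ) 0) * (z - Real.sign yv * max (|yv| - θ) 0)
      ≤ θ * |z| := by
  rcases le_or_gt (|yv|) θ with h | h
  · have hs : Real.sign yv * max (|yv| - θ) 0 = 0 := by
      rw [max_eq_right (by linarith)]; ring
    rw [hs]
    have h1 : yv * z ≤ |yv| * |z| := by
      calc yv * z ≤ |yv * z| := le_abs_self _
        _ = |yv| * |z| := abs_mul _ _
    have h2 : |yv| * |z| ≤ θ * |z| := mul_le_mul_of_nonneg_right h (abs_nonneg z)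
    simpa using h1.trans h2
  · have hmax : max (|yv| - θ) 0 = |yv| - θ := max_eq_left (by linarith)
    rcases lt_trichotomy yv 0 with hy | hy | hy
    · rw [Real.sign_of_neg hy, hmax, abs_of_neg hy]
      have he : (-1 : ℝ) * (-yv - θ) = yv + θ := by ring
      have hneg : yv + θ < 0 := by rw [abs_of_neg hy] at h; linarith
      rw [he, abs_of_neg hneg]
      nlinarith [neg_abs_le z, abs_nonneg z]
    · exfalso; rw [hy] at h; simp at h; linarith
    · rw [Real.sign_of_pos hy, hmax, abs_of_pos hy]
      have hpos : 0 ≤ yv - θ := by rw [abs_of_pos hy] at h; linarith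
      rw [one_mul, abs_of_nonneg hpos]
      nlinarith [le_abs_self z]

lemma prox_scalar_quad {θ : ℝ} (hθ : 0 ≤ θ) (yv z : ℝ) :
    θ * |Real.sign yv * max (|yv| - θ) 0|
      + (Real.sign yv * max (|yv| - θ) 0 - yv) ^ 2 / 2
      + (z - Real.sign yv * max (|yv| - θ) 0) ^ 2 / 2
      ≤ θ * |z| + (z - yv) ^ 2 / 2 := by
  nlinarith [prox_scalar hθ yv z]

lemma prox_step {θ : ℝ} (hθ : 0 ≤ θ) (yv xp z : EuclideanSpace ℝ (Fin n))
    (hxp : ∀ i, xp i = Real.sign (yv i) * max (|yv i| - θ) 0) :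
    θ * l1Norm xp + ‖xp - yv‖ ^ 2 / 2 + ‖z - xp‖ ^ 2 / 2
      ≤ θ * l1Norm z + ‖z - yv‖ ^ 2 / 2 := by
  have key : ∀ i : Fin n, θ * |xp i| + (xp i - yv i) ^ 2 / 2 + (z i - xp i) ^ 2 / 2
      ≤ θ * |z i| + (z i - yv i) ^ 2 / 2 := fun i => by
    rw [hxp i]; exact prox_scalar_quad hθ (yv i) (z i)
  have e1 : ‖xp - yv‖ ^ 2 = ∑ i, (xp i - yv i) ^ 2 := by
    rw [norm_sq_eq]; exact Finset.sum_congr rfl fun i _ => by rw [PiLp.sub_apply]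
  have e2 : ‖z - xp‖ ^ 2 = ∑ i, (z i - xp i) ^ 2 := by
    rw [norm_sq_eq]; exact Finset.sum_congr rfl fun i _ => by rw [PiLp.sub_apply]
  have e3 : ‖z - yv‖ ^ 2 = ∑ i, (z i - yv i) ^ 2 := by
    rw [norm_sq_eq]; exact Finset.sum_congr rfl fun i _ => by rw [PiLp.sub_apply]
  have hsum := Finset.sum_le_sum fun i (_ : i ∈ Finset.univ) => key i
  simp only [Finset.sum_add_distrib, ← Finset.sum_div, ← Finset.mul_sum] at hsum
  rw [e1, e2, e3, l1Norm, l1Norm]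
  linarith

end Prox

open RealInnerProductSpace in
/-- sublinear convergence of the explicit proximal gradient (soft
thresholding) iteration for ℓ¹-regularized logistic regression
`min Σᵢ log(1 + exp(-bᵢ (Ax)ᵢ)) + λ‖x‖₁`. -/
theorem sparse_logistic_pg_converge {m n : ℕ}
    (A : Matrix (Fin m) (Fin n) ℝ) (b : EuclideanSpace ℝ (Fin m)) (lam : ℝ) (hlam : 0 < lam)
    (L : ℝ) (hL : 0 < L)
    (hlip : ∀ u v : EuclideanSpace ℝ (Fin n),
      ‖gradient (fun x : EuclideanSpace ℝ (Fin n) =>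
            ∑ i, Real.log (1 + Real.exp (-b i * mulVecE A x i))) u
          - gradient (fun x : EuclideanSpace ℝ (Fin n) =>
            ∑ i, Real.log (1 + Real.exp (-b i * mulVecE A x i))) v‖
        ≤ L * ‖u - v‖)
    (t : ℝ) (ht : 0 < t) (ht' : t ≤ 1 / L)
    (x₀ : EuclideanSpace ℝ (Fin n)) (x y : ℕ → EuclideanSpace ℝ (Fin n))
    (hx0 : x 0 = x₀)
    (hy : ∀ k : ℕ, y k = x k - t • mulVecE Aᵀ (logisticDual A b (x k)))
    (hupdate : ∀ (k : ℕ) (i : Fin n),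
      x (k + 1) i = Real.sign (y k i) * max (|y k i| - t * lam) 0) :
    ∀ (k : ℕ+) (xm : EuclideanSpace ℝ (Fin n)),
      ((∑ i, Real.log (1 + Real.exp (-b i * mulVecE A (x k) i))) + lam * l1Norm (x k))
          - ((∑ i, Real.log (1 + Real.exp (-b i * mulVecE A xm i))) + lam * l1Norm xm)
        ≤ 1 / (2 * (k : ℝ) * t) * ‖x₀ - xm‖ ^ 2 := by
  intro k xm
  subst hx0
  have hlipf : ∀ u v : EuclideanSpace ℝ (Fin n),
      ‖gradient (flog A b) u - gradient (flog A b) v‖ ≤ L * ‖u - v‖ := hlip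
  have htL : t * L ≤ 1 := by rwa [le_div_iff₀ hL] at ht'
  -- the one-step estimate
  have step : ∀ (j : ℕ) (z : EuclideanSpace ℝ (Fin n)),
      t * (flog A b (x (j+1)) + lam * l1Norm (x (j+1))) + ‖x (j+1) - z‖ ^ 2 / 2
        ≤ t * (flog A b z + lam * l1Norm z) + ‖x j - z‖ ^ 2 / 2 := by
    intro j z
    set g := mulVecE Aᵀ (logisticDual A b (x j)) with hg
    have hD := flog_descent A b hlipf (x j) (x (j+1) - x j)
    rw [show x j + (x (j+1) - x j) = x (j+1) by abel] at hD
    have hC := flog_convex_ineq A b (x j) z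
    have hP := prox_step (mul_nonneg ht.le hlam.le) (y j) (x (j+1)) z
      (fun i => hupdate j i)
    have hexp : ∀ u : EuclideanSpace ℝ (Fin n),
        ‖u - y j‖ ^ 2 = ‖u - x j‖ ^ 2 + 2 * (t * ⟪g, u - x j⟫) + t ^ 2 * ‖g‖ ^ 2 := by
      intro u
      rw [hy j, ← hg, show u - (x j - t • g) = (u - x j) + t • g by abel, norm_add_sq_real,
        real_inner_smul_right, real_inner_comm, norm_smul, Real.norm_eq_abs, mul_pow, sq_abs]
    rw [hexp (x (j+1)), hexp z] at hP
    have hSxp : (0:ℝ) ≤ ‖x (j+1) - x j‖ ^ 2 := by positivity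
    have hD' := mul_le_mul_of_nonneg_left hD ht.le
    have hC' := mul_le_mul_of_nonneg_left hC ht.le
    have htLS := mul_le_mul_of_nonneg_right htL hSxp
    rw [norm_sub_rev (x (j+1)) z, norm_sub_rev (x j) z]
    nlinarith [hD', hC', hP, htLS]
  -- monotonicity of the objective
  have mono : ∀ j : ℕ, t * (flog A b (x (j+1)) + lam * l1Norm (x (j+1)))
      ≤ t * (flog A b (x j) + lam * l1Norm (x j)) := by
    intro j
    have := step j (x j)
    rw [sub_self, norm_zero] at this
    nlinarith [sq_nonneg ‖x (j+1) - x j‖]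
  -- telescoped estimate
  have claim : ∀ N : ℕ,
      t * (N * ((flog A b (x N) + lam * l1Norm (x N)) - (flog A b xm + lam * l1Norm xm)))
        + ‖x N - xm‖ ^ 2 / 2 ≤ ‖x 0 - xm‖ ^ 2 / 2 := by
    intro N
    induction N with
    | zero => simp
    | succ N ih =>
      have hstep := step N xm
      have h1 := mul_le_mul_of_nonneg_left (mono N) (Nat.cast_nonneg (α := ℝ) N)
      push_cast
      push_cast at ih
      nlinarith [hstep, h1, ih]
  have hc := claim k
  have hk : (0:ℝ) < (k:ℝ) := by exact_mod_cast k.pos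
  have h2kt : (0:ℝ) < 2 * (k:ℝ) * t := by positivity
  have hS : (0:ℝ) ≤ ‖x (k:ℕ) - xm‖ ^ 2 / 2 := by positivity
  rw [show (1:ℝ) / (2 * (k:ℝ) * t) * ‖x 0 - xm‖ ^ 2
      = ‖x 0 - xm‖ ^ 2 / (2 * (k:ℝ) * t) by ring, le_div_iff₀ h2kt]
  show ((flog A b (x k) + lam * l1Norm (x k)) - (flog A b xm + lam * l1Norm xm))
      * (2 * (k:ℝ) * t) ≤ ‖x 0 - xm‖ ^ 2
  nlinarith [hc, hS]
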